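/- arXiv:2605.07116 — 4 statements merged into one kernel-verified Lean document; each statement's English description precedes it below -/
import Mathlib

section
/- Let d ≥ 1, h > 0, and 1 ≤ i ≤ d. Let z ∈ L²(ℝ^d) and let a_i : ℝ^d → ℝ be bounded and measurable with D_i^{+,h}a_i essentially bounded. Then |∫_{ℝ^d} z(x) a_i(x) D_i^{0,h}z(x) dx| ≤ (1/2) ‖D_i^{+,h}a_i‖_{L^∞(ℝ^d)} ‖z‖²_{L²(ℝ^d)}. -/
open MeasureTheory
open scoped ENNReal
open scoped RealInnerProductSpace

noncomputable section

/-- Forward difference quotient `D_i^{+,h} v (x) = (v(x + h eᵢ) − v(x))/h`. -/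
def Dplus {d : ℕ} (h : ℝ) (i : Fin d) (v : EuclideanSpace ℝ (Fin d) → ℝ)
    (x : EuclideanSpace ℝ (Fin d)) : ℝ :=
  (v (x + h • EuclideanSpace.single i 1) - v x) / h

/-- Central difference quotient `D_i^{0,h} v (x) = (v(x + h eᵢ) − v(x − h eᵢ))/(2h)`. -/
def Dzero {d : ℕ} (h : ℝ) (i : Fin d) (v : EuclideanSpace ℝ (Fin d) → ℝ)
    (x : EuclideanSpace ℝ (Fin d)) : ℝ :=
  (v (x + h • EuclideanSpace.single i 1) - v (x - h • EuclideanSpace.single i 1)) / (2 * h)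

/-- Transport bound: `|∫ z aᵢ D_i^{0,h} z| ≤ (1/2) ‖D_i^{+,h} aᵢ‖_{L^∞} ‖z‖²_{L²}`. -/
theorem central_difference_transport_bound
    (d : ℕ) (hd : 1 ≤ d) (h : ℝ) (hh : 0 < h) (i : Fin d)
    (z : EuclideanSpace ℝ (Fin d) → ℝ)
    (hz : MemLp z 2 (volume : Measure (EuclideanSpace ℝ (Fin d))))
    (a : EuclideanSpace ℝ (Fin d) → ℝ)
    (ha_meas : Measurable a) (ha_bdd : ∃ C : ℝ, ∀ x, |a x| ≤ C)
    (hDa : MemLp (Dplus h i a) ∞ (volume : Measure (EuclideanSpace ℝ (Fin d)))) :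
    |∫ x, z x * a x * Dzero h i z x|
      ≤ (1/2) * (eLpNorm (Dplus h i a) ∞
            (volume : Measure (EuclideanSpace ℝ (Fin d)))).toReal
          * ((eLpNorm z 2 (volume : Measure (EuclideanSpace ℝ (Fin d)))).toReal) ^ 2 := by
  set μ : Measure (EuclideanSpace ℝ (Fin d)) := volume with hμ
  set e : EuclideanSpace ℝ (Fin d) := h • EuclideanSpace.single i 1 with he
  have pres : MeasurePreserving (fun x : EuclideanSpace ℝ (Fin d) => x + e) μ μ :=
    measurePreserving_add_right μ e
  -- shifted functions
  have hzp : MemLp (fun x => z (x + e)) 2 μ := hz.comp_measurePreserving pres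
  have hzp_norm : eLpNorm (fun x => z (x + e)) 2 μ = eLpNorm z 2 μ :=
    eLpNorm_comp_measurePreserving hz.1 pres
  have hhalf : (1:ℝ≥0∞)/1 = 1/2 + 1/2 := by
    simp [one_div, ENNReal.inv_two_add_inv_two]
  -- z * z₊ is integrable
  have hmul : Integrable (fun x => z x * z (x + e)) μ := by
    have := (hzp.smul hz : MemLp (z • fun x => z (x + e)) 1 μ)
    exact memLp_one_iff_integrable.mp (by simpa [Pi.smul_apply, smul_eq_mul, Pi.mul_def] using this)
  obtain ⟨Ca, hCa⟩ := ha_bdd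
  have ha_asm : AEStronglyMeasurable a μ := ha_meas.aestronglyMeasurable
  -- integrability of z a z₊
  have hI1 : Integrable (fun x => z x * a x * z (x + e)) μ := by
    have : Integrable (fun x => a x * (z x * z (x + e))) μ :=
      hmul.bdd_mul ha_asm (Filter.Eventually.of_forall fun x => by simpa [Real.norm_eq_abs] using hCa x)
    refine this.congr (Filter.Eventually.of_forall fun x => by ring)
  -- integrability of z a z₋
  have hmul2 : Integrable (fun x => z x * z (x - e)) μ := by
    have presm : MeasurePreserving (fun x : EuclideanSpace ℝ (Fin d) => x + (-e)) μ μ :=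
      measurePreserving_add_right μ (-e)
    have hzm : MemLp (fun x => z (x - e)) 2 μ := by
      simpa [sub_eq_add_neg, Function.comp_def] using hz.comp_measurePreserving presm
    have := (hzm.smul hz : MemLp (z • fun x => z (x - e)) 1 μ)
    exact memLp_one_iff_integrable.mp (by simpa [Pi.smul_apply, smul_eq_mul, Pi.mul_def] using this)
  have hI2 : Integrable (fun x => z x * a x * z (x - e)) μ := by
    have : Integrable (fun x => a x * (z x * z (x - e))) μ :=
      hmul2.bdd_mul ha_asm (Filter.Eventually.of_forall fun x => by simpa [Real.norm_eq_abs] using hCa x)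
    refine this.congr (Filter.Eventually.of_forall fun x => by ring)
  -- integrability of z₊ a₊ z (translate of z a z₋)
  have hI3 : Integrable (fun x => z (x + e) * a (x + e) * z x) μ := by
    have := (memLp_one_iff_integrable.mpr hI2).comp_measurePreserving pres
    have h2 := memLp_one_iff_integrable.mp this
    refine h2.congr (Filter.Eventually.of_forall fun x => ?_)
    simp [Function.comp, add_sub_cancel_right]
  -- shift identity
  have hshift : ∫ x, z x * a x * z (x - e) ∂μ = ∫ x, z (x + e) * a (x + e) * z x ∂μ := by
    have := integral_add_right_eq_self (μ := μ) (fun x => z x * a x * z (x - e)) e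
    rw [← this]
    congr 1
    funext x
    simp [add_sub_cancel_right]
  -- rewrite the integral
  have key : ∫ x, z x * a x * Dzero h i z x ∂μ
      = ∫ x, (-(1/2)) * (z x * z (x + e) * Dplus h i a x) ∂μ := by
    have hsplit : (fun x => z x * a x * Dzero h i z x)
        = fun x => (1/(2*h)) * (z x * a x * z (x + e)) - (1/(2*h)) * (z x * a x * z (x - e)) := by
      funext x
      rw [Dzero, ← he]
      field_simp
    rw [hsplit, integral_sub (hI1.const_mul _) (hI2.const_mul _),
      integral_const_mul, integral_const_mul, hshift, ← integral_const_mul, ← integral_const_mul,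
      ← integral_sub (hI1.const_mul _) (hI3.const_mul _)]
    congr 1
    funext x
    rw [Dplus, ← he]
    field_simp
    ring
  rw [key]
  -- the L∞ bound
  set C : ℝ := (eLpNorm (Dplus h i a) ∞ μ).toReal with hC
  have hDa_ae : ∀ᵐ x ∂μ, |Dplus h i a x| ≤ C := by
    have h1 : ∀ᵐ x ∂μ, (‖Dplus h i a x‖₊ : ℝ≥0∞) ≤ eLpNormEssSup (Dplus h i a) μ :=
      enorm_ae_le_eLpNormEssSup _ _
    have hfin : eLpNormEssSup (Dplus h i a) μ ≠ ∞ := by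
      have := hDa.2
      rw [eLpNorm_exponent_top] at this
      exact this.ne
    filter_upwards [h1] with x hx
    have : ((‖Dplus h i a x‖₊ : ℝ≥0∞)).toReal ≤ (eLpNormEssSup (Dplus h i a) μ).toReal :=
      ENNReal.toReal_mono hfin hx
    simpa [hC, eLpNorm_exponent_top, Real.norm_eq_abs] using this
  have hC0 : 0 ≤ C := ENNReal.toReal_nonneg
  -- Cauchy-Schwarz
  haveI : Fact ((1:ℝ≥0∞) ≤ 2) := ⟨one_le_two⟩
  have hCS : ∫ x, ‖z x‖ * ‖z (x + e)‖ ∂μ ≤ (eLpNorm z 2 μ).toReal ^ 2 := by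
    set F : Lp ℝ 2 μ := (hz.norm).toLp _
    set G : Lp ℝ 2 μ := (hzp.norm).toLp _
    have hinner : ⟪F, G⟫ = ∫ x, ‖z x‖ * ‖z (x + e)‖ ∂μ := by
      rw [MeasureTheory.L2.inner_def]
      refine integral_congr_ae ?_
      filter_upwards [MemLp.coeFn_toLp hz.norm, MemLp.coeFn_toLp hzp.norm] with x hFx hGx
      simp only [F, G, hFx, hGx]
      simp [RCLike.inner_apply, conj_trivial, mul_comm]
    have hFn : ‖F‖ = (eLpNorm z 2 μ).toReal := by
      rw [Lp.norm_toLp, eLpNorm_norm]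
    have hGn : ‖G‖ = (eLpNorm z 2 μ).toReal := by
      rw [Lp.norm_toLp, eLpNorm_norm, hzp_norm]
    calc ∫ x, ‖z x‖ * ‖z (x + e)‖ ∂μ = ⟪F, G⟫ := hinner.symm
      _ ≤ ‖F‖ * ‖G‖ := real_inner_le_norm F G
      _ = (eLpNorm z 2 μ).toReal ^ 2 := by rw [hFn, hGn, sq]
  -- integrable bounds
  have hint_abs : Integrable (fun x => |z x * z (x + e) * Dplus h i a x|) μ := by
    have hb : ∀ᵐ x ∂μ, ‖Dplus h i a x‖ ≤ C := by
      filter_upwards [hDa_ae] with x hx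
      simpa [Real.norm_eq_abs] using hx
    refine (Integrable.bdd_mul (c := C) hmul hDa.1 hb).abs.congr
      (Filter.Eventually.of_forall fun x => congrArg abs (mul_comm _ _))
  have habs : |∫ x, (-(1/2)) * (z x * z (x + e) * Dplus h i a x) ∂μ|
      ≤ (1/2) * ∫ x, |z x * z (x + e) * Dplus h i a x| ∂μ := by
    rw [integral_const_mul, abs_mul, abs_neg, abs_of_nonneg (by norm_num : (0:ℝ) ≤ 1/2)]
    have hnn := norm_integral_le_integral_norm (μ := μ)
      (f := fun x => z x * z (x + e) * Dplus h i a x)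
    simp only [Real.norm_eq_abs] at hnn
    exact mul_le_mul_of_nonneg_left hnn (by norm_num)
  refine habs.trans ?_
  have hbound : ∫ x, |z x * z (x + e) * Dplus h i a x| ∂μ
      ≤ C * ∫ x, ‖z x‖ * ‖z (x + e)‖ ∂μ := by
    rw [← integral_const_mul]
    refine integral_mono_ae hint_abs ?_ ?_
    · refine (hmul.abs.const_mul C).congr (Filter.Eventually.of_forall fun x => ?_)
      simp [Real.norm_eq_abs, abs_mul, mul_assoc]
    · filter_upwards [hDa_ae] with x hx
      simp only [Real.norm_eq_abs, ← abs_mul]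
      rw [abs_mul, mul_comm C]
      exact mul_le_mul_of_nonneg_left hx (abs_nonneg _)
  calc (1/2) * ∫ x, |z x * z (x + e) * Dplus h i a x| ∂μ
      ≤ (1/2) * (C * ∫ x, ‖z x‖ * ‖z (x + e)‖ ∂μ) :=
        mul_le_mul_of_nonneg_left hbound (by norm_num)
    _ ≤ (1/2) * (C * ((eLpNorm z 2 μ).toReal ^ 2)) := by
        refine mul_le_mul_of_nonneg_left (mul_le_mul_of_nonneg_left hCS hC0) (by norm_num)
    _ = (1/2) * C * (eLpNorm z 2 μ).toReal ^ 2 := by ring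
end
end

section
/- Let d ≥ 1, h > 0, ν > 0, M_D ≥ 0. Let z, F ∈ L²(ℝ^d) and let a : ℝ^d → ℝ^d be bounded and measurable with Σ_{i=1}^d ‖D_i^{+,h}a_i‖_{L^∞(ℝ^d)} ≤ M_D. Then ∫_{ℝ^d} z(x) [ a(x)·∇₀ʰz(x) + ν Δ_h z(x) + F(x) ] dx ≤ ((M_D + 1)/2) ‖z‖²_{L²(ℝ^d)} − ν ‖∇₊ʰ z‖²_{L²(ℝ^d)} + (1/2) ‖F‖²_{L²(ℝ^d)}. -/
open MeasureTheory
open scoped ENNReal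

noncomputable section

/-- Discrete Laplacian `Δ_h v(x) = Σᵢ (v(x + h eᵢ) − 2 v(x) + v(x − h eᵢ))/h²`. -/
def discLap {d : ℕ} (h : ℝ) (v : EuclideanSpace ℝ (Fin d) → ℝ)
    (x : EuclideanSpace ℝ (Fin d)) : ℝ :=
  ∑ i : Fin d,
    (v (x + h • EuclideanSpace.single i 1) - 2 * v x
      + v (x - h • EuclideanSpace.single i 1)) / h ^ 2

namespace DEI

variable {α : Type*} [MeasurableSpace α] {μ : Measure α}

lemma integrable_mul2 {f g : α → ℝ} (hf : MemLp f 2 μ) (hg : MemLp g 2 μ) :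
    Integrable (fun x => f x * g x) μ :=
  memLp_one_iff_integrable.mp (hg.smul hf (r := 1) (hpqr := ⟨by rw [inv_one, ENNReal.inv_two_add_inv_two]⟩))

lemma cs {f g : α → ℝ} (hf : MemLp f 2 μ) (hg : MemLp g 2 μ) :
    ∫ x, f x * g x ∂μ ≤ (eLpNorm f 2 μ).toReal * (eLpNorm g 2 μ).toReal := by
  have h1 : ∫ x, f x * g x ∂μ = @inner ℝ _ _ (hf.toLp f) (hg.toLp g) := by
    rw [MeasureTheory.L2.inner_def]
    refine integral_congr_ae ?_
    filter_upwards [hf.coeFn_toLp, hg.coeFn_toLp] with x h1 h2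
    simp [h1, h2, RCLike.inner_apply]
    ring
  rw [h1]
  calc @inner ℝ _ _ (hf.toLp f) (hg.toLp g) ≤ ‖hf.toLp f‖ * ‖hg.toLp g‖ := real_inner_le_norm _ _
    _ = _ := by rw [Lp.norm_toLp f hf, Lp.norm_toLp g hg]

lemma cs_abs {f g : α → ℝ} (hf : MemLp f 2 μ) (hg : MemLp g 2 μ) :
    ∫ x, |f x * g x| ∂μ ≤ (eLpNorm f 2 μ).toReal * (eLpNorm g 2 μ).toReal := by
  have h1 : ∫ x, |f x * g x| ∂μ = ∫ x, |f x| * |g x| ∂μ := by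
    refine integral_congr_ae (Filter.Eventually.of_forall fun x => abs_mul _ _)
  rw [h1]
  have h2 := cs (μ := μ) hf.norm hg.norm
  rw [eLpNorm_norm, eLpNorm_norm] at h2
  simpa [Real.norm_eq_abs] using h2

lemma sq_eq {f : α → ℝ} (hf : MemLp f 2 μ) :
    ∫ x, f x * f x ∂μ = ((eLpNorm f 2 μ).toReal) ^ 2 := by
  have h1 : ∫ x, f x * f x ∂μ = @inner ℝ _ _ (hf.toLp f) (hf.toLp f) := by
    rw [MeasureTheory.L2.inner_def]
    refine integral_congr_ae ?_
    filter_upwards [hf.coeFn_toLp] with x h1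
    simp [h1, RCLike.inner_apply]
    ring
  rw [h1, real_inner_self_eq_norm_sq, Lp.norm_toLp f hf]

lemma integral_lin3 {p q r : α → ℝ} (hp : Integrable p μ) (hq : Integrable q μ)
    (hr : Integrable r μ) (c1 c2 c3 : ℝ) :
    ∫ x, (c1 * p x + c2 * q x + c3 * r x) ∂μ
      = c1 * ∫ x, p x ∂μ + c2 * ∫ x, q x ∂μ + c3 * ∫ x, r x ∂μ := by
  have h12 : Integrable (fun x => c1 * p x + c2 * q x) μ :=
    (hp.const_mul c1).add (hq.const_mul c2)
  rw [integral_add h12 (hr.const_mul c3), integral_add (hp.const_mul c1) (hq.const_mul c2),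
      integral_const_mul, integral_const_mul, integral_const_mul]

variable {d : ℕ}

lemma memℒp_shift {p : ℝ≥0∞} {f : EuclideanSpace ℝ (Fin d) → ℝ}
    (hf : MemLp f p volume) (c : EuclideanSpace ℝ (Fin d)) :
    MemLp (fun x => f (x + c)) p volume :=
  hf.comp_measurePreserving (measurePreserving_add_right volume c)

lemma integral_shift (f : EuclideanSpace ℝ (Fin d) → ℝ) (c : EuclideanSpace ℝ (Fin d)) :
    ∫ x, f (x + c) = ∫ x, f x := integral_add_right_eq_self f c

lemma eLpNorm_shift {p : ℝ≥0∞} {f : EuclideanSpace ℝ (Fin d) → ℝ}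
    (hf : AEStronglyMeasurable f volume) (c : EuclideanSpace ℝ (Fin d)) :
    eLpNorm (fun x => f (x + c)) p volume = eLpNorm f p volume :=
  eLpNorm_comp_measurePreserving hf (measurePreserving_add_right volume c)


lemma ae_abs_le {f : EuclideanSpace ℝ (Fin d) → ℝ} (hf : MemLp f ∞ volume) :
    ∀ᵐ x, |f x| ≤ (eLpNorm f ∞ volume).toReal := by
  have h1 : eLpNormEssSup f volume ≠ ⊤ := by
    have h2 := hf.2
    rw [eLpNorm_exponent_top] at h2
    exact h2.ne
  filter_upwards [ae_le_eLpNormEssSup (f := f) (μ := (volume : Measure (EuclideanSpace ℝ (Fin d))))] with x hx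
  have h2 := ENNReal.toReal_mono h1 hx
  rw [eLpNorm_exponent_top]
  simpa [Real.norm_eq_abs] using h2

lemma memℒp_shift_sub {p : ℝ≥0∞} {f : EuclideanSpace ℝ (Fin d) → ℝ}
    (hf : MemLp f p volume) (c : EuclideanSpace ℝ (Fin d)) :
    MemLp (fun x => f (x - c)) p volume := by
  simpa [sub_eq_add_neg] using memℒp_shift hf (-c)

lemma memℒp_Dplus {h : ℝ} (i : Fin d) {z : EuclideanSpace ℝ (Fin d) → ℝ}
    (hz : MemLp z 2 volume) : MemLp (Dplus h i z) 2 volume := by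
  have h1 : MemLp (fun x => z (x + h • EuclideanSpace.single i 1) - z x) 2 volume :=
    MemLp.sub (memℒp_shift hz _) hz
  have h2 := h1.const_mul (1 / h)
  refine h2.ae_eq (Filter.Eventually.of_forall fun x => ?_)
  simp only [Dplus]
  ring

lemma memℒp_Dzero {h : ℝ} (i : Fin d) {z : EuclideanSpace ℝ (Fin d) → ℝ}
    (hz : MemLp z 2 volume) : MemLp (Dzero h i z) 2 volume := by
  have h1 : MemLp (fun x => z (x + h • EuclideanSpace.single i 1)
      - z (x - h • EuclideanSpace.single i 1)) 2 volume :=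
    MemLp.sub (memℒp_shift hz _) (memℒp_shift_sub hz _)
  have h2 := h1.const_mul (1 / (2 * h))
  refine h2.ae_eq (Filter.Eventually.of_forall fun x => ?_)
  simp only [Dzero]
  ring

lemma lap_eq {h : ℝ} (i : Fin d) {z : EuclideanSpace ℝ (Fin d) → ℝ}
    (hz : MemLp z 2 volume) :
    ∫ x, z x * ((z (x + h • EuclideanSpace.single i 1) - 2 * z x
        + z (x - h • EuclideanSpace.single i 1)) / h ^ 2)
      = -((eLpNorm (Dplus h i z) 2 volume).toReal) ^ 2 := by
  set c : EuclideanSpace ℝ (Fin d) := h • EuclideanSpace.single i 1 with hc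
  have hT : MemLp (fun x => z (x + c)) 2 volume := memℒp_shift hz c
  have hS : MemLp (fun x => z (x - c)) 2 volume := memℒp_shift_sub hz c
  have iTz : Integrable (fun x => z x * z (x + c)) volume := integrable_mul2 hz hT
  have izz : Integrable (fun x => z x * z x) volume := integrable_mul2 hz hz
  have iSz : Integrable (fun x => z x * z (x - c)) volume := integrable_mul2 hz hS
  have iTT : Integrable (fun x => z (x + c) * z (x + c)) volume := integrable_mul2 hT hT
  have hshift : ∫ x, z x * z (x - c) = ∫ x, z x * z (x + c) := by
    have h0 := integral_shift (fun x => z x * z (x - c)) c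
    calc ∫ x, z x * z (x - c) = ∫ x, z (x + c) * z (x + c - c) := by
          refine Eq.trans h0.symm ?_
          exact integral_congr_ae (Filter.Eventually.of_forall fun x => by simp)
      _ = ∫ x, z x * z (x + c) := by
          refine integral_congr_ae (Filter.Eventually.of_forall fun x => ?_)
          simp [add_sub_cancel_right, mul_comm]
  have hTT : ∫ x, z (x + c) * z (x + c) = ∫ x, z x * z x :=
    integral_shift (fun x => z x * z x) c
  have hL : ∫ x, z x * ((z (x + c) - 2 * z x + z (x - c)) / h ^ 2)
      = (1/h^2) * (∫ x, z x * z (x + c)) + (-(2/h^2)) * (∫ x, z x * z x)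
        + (1/h^2) * (∫ x, z x * z (x - c)) := by
    rw [← integral_lin3 iTz izz iSz]
    exact integral_congr_ae (Filter.Eventually.of_forall fun x => by ring)
  have hD := sq_eq (memℒp_Dplus (h := h) i hz)
  have hDD : ∫ x, Dplus h i z x * Dplus h i z x
      = (1/h^2) * (∫ x, z (x + c) * z (x + c)) + (-(2/h^2)) * (∫ x, z x * z (x + c))
        + (1/h^2) * (∫ x, z x * z x) := by
    rw [← integral_lin3 iTT iTz izz]
    refine integral_congr_ae (Filter.Eventually.of_forall fun x => ?_)
    simp only [Dplus, ← hc]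
    ring
  rw [hL, hshift, ← hD, hDD, hTT]
  ring


lemma convection_bound {h : ℝ} (hh : 0 < h) (i : Fin d)
    {z : EuclideanSpace ℝ (Fin d) → ℝ} (hz : MemLp z 2 volume)
    {a : EuclideanSpace ℝ (Fin d) → ℝ} (ha : MemLp a ∞ volume)
    (hDa : MemLp (Dplus h i a) ∞ volume) :
    ∫ x, z x * (a x * Dzero h i z x)
      ≤ (eLpNorm (Dplus h i a) ∞ volume).toReal / 2
          * ((eLpNorm z 2 volume).toReal) ^ 2 := by
  have hne : h ≠ 0 := hh.ne'
  set c : EuclideanSpace ℝ (Fin d) := h • EuclideanSpace.single i 1 with hc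
  set G := (eLpNorm (Dplus h i a) ∞ volume).toReal with hGdef
  set Nz := (eLpNorm z 2 volume).toReal with hNzdef
  have hG0 : 0 ≤ G := ENNReal.toReal_nonneg
  have hT : MemLp (fun x => z (x + c)) 2 volume := memℒp_shift hz c
  have hS : MemLp (fun x => z (x - c)) 2 volume := memℒp_shift_sub hz c
  have hTa : MemLp (fun x => a (x + c)) ∞ volume := memℒp_shift ha c
  have haT : MemLp (fun x => a x * z (x + c)) 2 volume := hT.smul ha
  have haS : MemLp (fun x => a x * z (x - c)) 2 volume := hS.smul ha
  have hTaT : MemLp (fun x => a (x + c) * z x) 2 volume := hz.smul hTa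
  have hgT : MemLp (fun x => Dplus h i a x * z (x + c)) 2 volume := hT.smul hDa
  have i1 : Integrable (fun x => z x * (a x * z (x + c))) volume := integrable_mul2 hz haT
  have i2 : Integrable (fun x => z x * (a x * z (x - c))) volume := integrable_mul2 hz haS
  have iTaT : Integrable (fun x => z (x + c) * (a (x + c) * z x)) volume := by
    have := integrable_mul2 hTaT hT
    refine this.congr (Filter.Eventually.of_forall fun x => ?_)
    ring
  have i3 : Integrable (fun x => z x * (Dplus h i a x * z (x + c))) volume :=
    integrable_mul2 hz hgT
  have hL2 : ∫ x, z x * (a x * Dzero h i z x)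
      = (1/(2*h)) * ((∫ x, z x * (a x * z (x + c))) - ∫ x, z x * (a x * z (x - c))) := by
    rw [← integral_sub i1 i2, ← integral_const_mul]
    refine integral_congr_ae (Filter.Eventually.of_forall fun x => ?_)
    simp only [Dzero, ← hc]
    ring
  have hshift : ∫ x, z (x + c) * (a (x + c) * z x) = ∫ x, z x * (a x * z (x - c)) := by
    have h0 := integral_shift (fun x => z x * (a x * z (x - c))) c
    refine Eq.trans ?_ h0
    refine integral_congr_ae (Filter.Eventually.of_forall fun x => ?_)
    simp [add_sub_cancel_right]
  have hcomb : (∫ x, z x * (a x * z (x + c))) - (∫ x, z (x + c) * (a (x + c) * z x))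
      = (-h) * ∫ x, z x * (Dplus h i a x * z (x + c)) := by
    rw [← integral_sub i1 iTaT, ← integral_const_mul]
    refine integral_congr_ae (Filter.Eventually.of_forall fun x => ?_)
    simp only [Dplus, ← hc]
    field_simp
    ring
  have key : ∫ x, z x * (a x * Dzero h i z x)
      = -(1/2) * ∫ x, z x * (Dplus h i a x * z (x + c)) := by
    rw [hL2, ← hshift, hcomb]
    field_simp
  have habs : |∫ x, z x * (Dplus h i a x * z (x + c))| ≤ G * Nz ^ 2 := by
    have hb1 : |∫ x, z x * (Dplus h i a x * z (x + c))|
        ≤ ∫ x, |z x * (Dplus h i a x * z (x + c))| := by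
      rw [← Real.norm_eq_abs]
      refine (norm_integral_le_integral_norm _).trans_eq ?_
      simp only [Real.norm_eq_abs]
    have hb2 : ∫ x, |z x * (Dplus h i a x * z (x + c))| ≤ ∫ x, G * |z x * z (x + c)| := by
      refine integral_mono_ae i3.abs (((integrable_mul2 hz hT).abs).const_mul G) ?_
      filter_upwards [ae_abs_le hDa] with x hx
      calc |z x * (Dplus h i a x * z (x + c))| = |z x * z (x + c)| * |Dplus h i a x| := by
            rw [← abs_mul]; ring_nf
        _ ≤ |z x * z (x + c)| * G := by
            exact mul_le_mul_of_nonneg_left hx (abs_nonneg _)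
        _ = G * |z x * z (x + c)| := mul_comm _ _
    have hb3 : ∫ x, G * |z x * z (x + c)| = G * ∫ x, |z x * z (x + c)| := integral_const_mul _ _
    have hb4 : ∫ x, |z x * z (x + c)| ≤ Nz * Nz := by
      have := cs_abs hz hT
      rwa [eLpNorm_shift hz.1 c] at this
    calc |∫ x, z x * (Dplus h i a x * z (x + c))| ≤ ∫ x, G * |z x * z (x + c)| := hb1.trans hb2
      _ = G * ∫ x, |z x * z (x + c)| := hb3
      _ ≤ G * (Nz * Nz) := mul_le_mul_of_nonneg_left hb4 hG0
      _ = G * Nz ^ 2 := by ring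
  rw [key]
  have := neg_abs_le (∫ x, z x * (Dplus h i a x * z (x + c)))
  linarith

end DEI

set_option maxHeartbeats 1000000

/-- One-step energy inequality:
`∫ z (a·∇₀ʰ z + ν Δ_h z + F) ≤ ((M_D+1)/2)‖z‖² − ν ‖∇₊ʰ z‖² + (1/2)‖F‖²`. -/
theorem discrete_energy_inequality
    (d : ℕ) (hd : 1 ≤ d) (h ν M_D : ℝ) (hh : 0 < h) (hν : 0 < ν) (hMD : 0 ≤ M_D)
    (z F : EuclideanSpace ℝ (Fin d) → ℝ)
    (hz : MemLp z 2 (volume : Measure (EuclideanSpace ℝ (Fin d))))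
    (hF : MemLp F 2 (volume : Measure (EuclideanSpace ℝ (Fin d))))
    (a : Fin d → EuclideanSpace ℝ (Fin d) → ℝ)
    (ha_meas : ∀ i, Measurable (a i))
    (ha_bdd : ∃ C : ℝ, ∀ i x, |a i x| ≤ C)
    (hDa_mem : ∀ i, MemLp (Dplus h i (a i)) ∞
        (volume : Measure (EuclideanSpace ℝ (Fin d))))
    (hDa : ∑ i : Fin d,
        (eLpNorm (Dplus h i (a i)) ∞
          (volume : Measure (EuclideanSpace ℝ (Fin d)))).toReal ≤ M_D) :
    ∫ x, z x * ((∑ i : Fin d, a i x * Dzero h i z x) + ν * discLap h z x + F x)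
      ≤ (M_D + 1) / 2 * ((eLpNorm z 2
              (volume : Measure (EuclideanSpace ℝ (Fin d)))).toReal) ^ 2
        - ν * ∑ i : Fin d,
            ((eLpNorm (Dplus h i z) 2
              (volume : Measure (EuclideanSpace ℝ (Fin d)))).toReal) ^ 2
        + (1/2) * ((eLpNorm F 2
              (volume : Measure (EuclideanSpace ℝ (Fin d)))).toReal) ^ 2 := by
  obtain ⟨C, haC⟩ := ha_bdd
  have ha_top : ∀ i, MemLp (a i) ∞ (volume : Measure (EuclideanSpace ℝ (Fin d))) := fun i =>
    memLp_top_of_bound ((ha_meas i).aestronglyMeasurable) C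
      (Filter.Eventually.of_forall fun x => by simpa [Real.norm_eq_abs] using haC i x)
  set Nz := (eLpNorm z 2 (volume : Measure (EuclideanSpace ℝ (Fin d)))).toReal with hNz
  set NF := (eLpNorm F 2 (volume : Measure (EuclideanSpace ℝ (Fin d)))).toReal with hNF
  have hterm : ∀ i : Fin d, MemLp (fun x => (z (x + h • EuclideanSpace.single i 1) - 2 * z x + z (x - h • EuclideanSpace.single i 1)) / h ^ 2) 2
      (volume : Measure (EuclideanSpace ℝ (Fin d))) := by
    intro i
    have h1 : MemLp (fun x => z (x + h • EuclideanSpace.single i 1) - 2 * z x) 2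
        (volume : Measure (EuclideanSpace ℝ (Fin d))) :=
      MemLp.sub (DEI.memℒp_shift hz _) (hz.const_mul 2)
    have h2 : MemLp (fun x => (z (x + h • EuclideanSpace.single i 1) - 2 * z x)
        + z (x - h • EuclideanSpace.single i 1)) 2
        (volume : Measure (EuclideanSpace ℝ (Fin d))) :=
      MemLp.add h1 (DEI.memℒp_shift_sub hz _)
    refine (h2.const_mul (1 / h ^ 2)).ae_eq (Filter.Eventually.of_forall fun x => ?_)
    ring
  have iConv : ∀ i : Fin d,
      Integrable (fun x => z x * (a i x * Dzero h i z x)) volume := fun i =>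
    DEI.integrable_mul2 hz ((DEI.memℒp_Dzero i hz).smul (ha_top i))
  have iLap : ∀ i : Fin d,
      Integrable (fun x => z x * ((z (x + h • EuclideanSpace.single i 1) - 2 * z x + z (x - h • EuclideanSpace.single i 1)) / h ^ 2)) volume := fun i =>
    DEI.integrable_mul2 hz (hterm i)
  have iF : Integrable (fun x => z x * F x) volume := DEI.integrable_mul2 hz hF
  have P1int : Integrable (fun x => ∑ i : Fin d, z x * (a i x * Dzero h i z x)) volume :=
    integrable_finset_sum _ (fun i _ => iConv i)
  have P2sum : Integrable (fun x => ∑ i : Fin d, z x * ((z (x + h • EuclideanSpace.single i 1) - 2 * z x + z (x - h • EuclideanSpace.single i 1)) / h ^ 2)) volume :=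
    integrable_finset_sum _ (fun i _ => iLap i)
  have P2int : Integrable (fun x => ν * ∑ i : Fin d, z x * ((z (x + h • EuclideanSpace.single i 1) - 2 * z x + z (x - h • EuclideanSpace.single i 1)) / h ^ 2)) volume := P2sum.const_mul ν
  have P12int : Integrable (fun x => (∑ i : Fin d, z x * (a i x * Dzero h i z x))
      + ν * ∑ i : Fin d, z x * ((z (x + h • EuclideanSpace.single i 1) - 2 * z x + z (x - h • EuclideanSpace.single i 1)) / h ^ 2)) volume := P1int.add P2int
  have hsplit : ∫ x, z x * ((∑ i : Fin d, a i x * Dzero h i z x) + ν * discLap h z x + F x)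
      = (∑ i : Fin d, ∫ x, z x * (a i x * Dzero h i z x))
        + ν * (∑ i : Fin d, ∫ x, z x * ((z (x + h • EuclideanSpace.single i 1) - 2 * z x + z (x - h • EuclideanSpace.single i 1)) / h ^ 2))
        + ∫ x, z x * F x := by
    calc ∫ x, z x * ((∑ i : Fin d, a i x * Dzero h i z x) + ν * discLap h z x + F x)
        = ∫ x, ((∑ i : Fin d, z x * (a i x * Dzero h i z x))
            + ν * ∑ i : Fin d, z x * ((z (x + h • EuclideanSpace.single i 1) - 2 * z x + z (x - h • EuclideanSpace.single i 1)) / h ^ 2) + z x * F x) := by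
          refine integral_congr_ae (Filter.Eventually.of_forall fun x => ?_)
          simp only [discLap]
          rw [mul_add, mul_add, Finset.mul_sum, mul_left_comm, Finset.mul_sum]
      _ = _ := by
          rw [integral_add P12int iF, integral_add P1int P2int,
              integral_finset_sum _ (fun i _ => iConv i), integral_const_mul,
              integral_finset_sum _ (fun i _ => iLap i)]
  rw [hsplit]
  have e1 : (∑ i : Fin d, ∫ x, z x * (a i x * Dzero h i z x)) ≤ M_D / 2 * Nz ^ 2 := by
    calc (∑ i : Fin d, ∫ x, z x * (a i x * Dzero h i z x))
        ≤ ∑ i : Fin d, (eLpNorm (Dplus h i (a i)) ∞ volume).toReal / 2 * Nz ^ 2 :=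
          Finset.sum_le_sum fun i _ => DEI.convection_bound hh i hz (ha_top i) (hDa_mem i)
      _ = (∑ i : Fin d, (eLpNorm (Dplus h i (a i)) ∞ volume).toReal) / 2 * Nz ^ 2 := by
          rw [← Finset.sum_mul, ← Finset.sum_div]
      _ ≤ M_D / 2 * Nz ^ 2 := by
          have hnn : (0:ℝ) ≤ Nz ^ 2 := sq_nonneg _
          gcongr
  have e2 : ν * (∑ i : Fin d, ∫ x, z x * ((z (x + h • EuclideanSpace.single i 1) - 2 * z x + z (x - h • EuclideanSpace.single i 1)) / h ^ 2))
      = -(ν * ∑ i : Fin d, ((eLpNorm (Dplus h i z) 2 volume).toReal) ^ 2) := by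
    rw [Finset.sum_congr rfl fun i _ => DEI.lap_eq i hz, Finset.sum_neg_distrib, mul_neg]
  have e3 : ∫ x, z x * F x ≤ 1/2 * Nz ^ 2 + 1/2 * NF ^ 2 := by
    have hcs := DEI.cs hz hF
    nlinarith [sq_nonneg (Nz - NF)]
  have hnn : (0:ℝ) ≤ Nz ^ 2 := sq_nonneg _
  linarith [e1, e2, e3]
end
end

section
/- Let d ≥ 1, h > 0, ν > 0, T > 0, M_D ≥ 0. Let z : [0,T] → L²(ℝ^d) be continuous and differentiable on (0,T) as a map into L²(ℝ^d), with derivative ∂_τ z, and let F : (0,T) → L²(ℝ^d) be measurable with ∫_0^T ‖F(τ)‖²_{L²(ℝ^d)} dτ < ∞. Let a : (0,T) × ℝ^d → ℝ^d be measurable with a(τ,·) bounded and Σ_{i=1}^d ‖D_i^{+,h}a_i(τ,·)‖_{L^∞(ℝ^d)} ≤ M_D for every τ ∈ (0,T). Assume that for every τ ∈ (0,T) the identity ∂_τ z(τ) = a(τ,·)·∇₀ʰ z(τ) + ν Δ_h z(τ) + F(τ) holds in L²(ℝ^d). Then there exists a constant C, depending only on T and M_D, such that sup_{0 ≤ s ≤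 T} ‖z(s)‖²_{L²(ℝ^d)} + 2ν ∫_0^T ‖∇₊ʰ z(τ)‖²_{L²(ℝ^d)} dτ ≤ C ( ‖z(0)‖²_{L²(ℝ^d)} + ∫_0^T ‖F(τ)‖²_{L²(ℝ^d)} dτ ). -/
open MeasureTheory
open scoped ENNReal

set_option maxHeartbeats 2000000
noncomputable section

section EGAux

variable {α : Type*} [MeasurableSpace α] {μ : Measure α} {f g : α → ℝ}

theorem EG.mulInt (hf : MemLp f 2 μ) (hg : MemLp g 2 μ) : Integrable (fun x => f x * g x) μ := by
  have := L2.integrable_inner (𝕜 := ℝ) (hf.toLp f) (hg.toLp g)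
  refine this.congr ?_
  filter_upwards [hf.coeFn_toLp, hg.coeFn_toLp] with x h1 h2
  simp [h1, h2, RCLike.inner_apply, mul_comm]

theorem EG.CS (hf : MemLp f 2 μ) (hg : MemLp g 2 μ) :
    ∫ x, f x * g x ∂μ ≤ (eLpNorm f 2 μ).toReal * (eLpNorm g 2 μ).toReal := by
  have h1 : (inner ℝ (hf.toLp f) (hg.toLp g) : ℝ) = ∫ x, f x * g x ∂μ := by
    rw [L2.inner_def]
    refine integral_congr_ae ?_
    filter_upwards [hf.coeFn_toLp, hg.coeFn_toLp] with x h1 h2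
    simp [h1, h2, RCLike.inner_apply, mul_comm]
  calc ∫ x, f x * g x ∂μ = _ := h1.symm
    _ ≤ ‖hf.toLp f‖ * ‖hg.toLp g‖ := real_inner_le_norm _ _
    _ = _ := by
      rw [Lp.norm_def, Lp.norm_def, eLpNorm_congr_ae hf.coeFn_toLp, eLpNorm_congr_ae hg.coeFn_toLp]

theorem EG.intSelf (hf : MemLp f 2 μ) : ∫ x, f x * f x ∂μ = ((eLpNorm f 2 μ).toReal)^2 := by
  have h1 : (inner ℝ (hf.toLp f) (hf.toLp f) : ℝ) = ∫ x, f x * f x ∂μ := by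
    rw [L2.inner_def]
    refine integral_congr_ae ?_
    filter_upwards [hf.coeFn_toLp] with x h1
    simp [h1, RCLike.inner_apply, mul_comm]; ring
  rw [← h1, real_inner_self_eq_norm_sq, Lp.norm_def, eLpNorm_congr_ae hf.coeFn_toLp]

theorem EG.CSabs (hf : MemLp f 2 μ) (hg : MemLp g 2 μ) :
    ∫ x, |f x * g x| ∂μ ≤ (eLpNorm f 2 μ).toReal * (eLpNorm g 2 μ).toReal := by
  have h := EG.CS hf.abs hg.abs
  have e1 : eLpNorm |f| 2 μ = eLpNorm f 2 μ := by
    rw [show |f| = fun x => ‖f x‖ by funext x; simp [Real.norm_eq_abs]]; exact eLpNorm_norm f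
  have e2 : eLpNorm |g| 2 μ = eLpNorm g 2 μ := by
    rw [show |g| = fun x => ‖g x‖ by funext x; simp [Real.norm_eq_abs]]; exact eLpNorm_norm g
  rw [e1, e2] at h
  calc ∫ x, |f x * g x| ∂μ = ∫ x, |f| x * |g| x ∂μ := by simp [abs_mul]
    _ ≤ _ := h

theorem EG.aeBound (hg : MemLp g ⊤ μ) : ∀ᵐ x ∂μ, |g x| ≤ (eLpNorm g ⊤ μ).toReal := by
  have h := ae_le_eLpNormEssSup (f := g) (μ := μ)
  filter_upwards [h] with x hx
  have h1 : (‖g x‖₊ : ℝ≥0∞) ≤ eLpNorm g ⊤ μ := by rwa [eLpNorm_exponent_top]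
  have h2 := ENNReal.toReal_mono (hg.eLpNorm_ne_top) h1
  simpa [Real.norm_eq_abs] using h2

-- Euclidean shift lemmas
variable {d : ℕ}
local notation "Euc" => EuclideanSpace ℝ (Fin d)
local notation "vol" => (volume : Measure (EuclideanSpace ℝ (Fin d)))

theorem EG.shiftMem {v : Euc → ℝ} (hv : MemLp v 2 vol) (c : Euc) :
    MemLp (fun x => v (x + c)) 2 vol :=
  hv.comp_measurePreserving (measurePreserving_add_right volume c)

theorem EG.shiftNorm (v : Euc → ℝ) (c : Euc) {p : ℝ≥0∞} (hv : AEStronglyMeasurable v vol) :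
    eLpNorm (fun x => v (x + c)) p vol = eLpNorm v p vol := by
  have := eLpNorm_comp_measurePreserving (p := p) (g := v) hv
    (measurePreserving_add_right (volume : Measure Euc) c)
  exact this

theorem EG.shiftInt (f : Euc → ℝ) (c : Euc) : ∫ x, f (x + c) = ∫ x, f x :=
  integral_add_right_eq_self f c

theorem EG.memSub {v : Euc → ℝ} (hv : MemLp v 2 vol) (c : Euc) :
    MemLp (fun x => v (x - c)) 2 vol := by
  have := EG.shiftMem hv (-c)
  simpa [sub_eq_add_neg] using this

theorem EG.lapId {v : Euc → ℝ} (hv : MemLp v 2 vol) (c : Euc) :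
    ∫ x, v x * (v (x + c) - 2 * v x + v (x - c)) = - ∫ x, (v (x + c) - v x)^2 := by
  have hvp := EG.shiftMem hv c
  have hvm := EG.memSub hv c
  have I1 : Integrable (fun x => v x * v (x + c)) vol := EG.mulInt hv hvp
  have I2 : Integrable (fun x => v x * v x) vol := EG.mulInt hv hv
  have I3 : Integrable (fun x => v x * v (x - c)) vol := EG.mulInt hv hvm
  have I4 : Integrable (fun x => v (x + c) * v (x + c)) vol := EG.mulInt hvp hvp
  have key1 : ∫ x, v x * v (x - c) = ∫ x, v x * v (x + c) := by
    have := EG.shiftInt (fun x => v x * v (x - c)) c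
    simp only [add_sub_cancel_right] at this
    rw [← this]
    congr 1; funext x; ring
  have key2 : ∫ x, v (x + c) * v (x + c) = ∫ x, v x * v x :=
    EG.shiftInt (fun x => v x * v x) c
  have I12 : Integrable (fun x => v x * v (x + c) - 2 * (v x * v x)) vol :=
    I1.sub (I2.const_mul 2)
  have L : ∫ x, v x * (v (x + c) - 2 * v x + v (x - c))
      = (∫ x, v x * v (x + c)) - 2 * (∫ x, v x * v x) + ∫ x, v x * v (x - c) := by
    have e : (fun x : Euc => v x * (v (x + c) - 2 * v x + v (x - c)))
        = fun x => (v x * v (x + c) - 2 * (v x * v x)) + v x * v (x - c) := by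
      funext x; ring
    rw [e, integral_add I12 I3, integral_sub I1 (I2.const_mul 2), integral_const_mul]
  have I41 : Integrable (fun x => v (x + c) * v (x + c) - 2 * (v x * v (x + c))) vol :=
    I4.sub (I1.const_mul 2)
  have R : ∫ x, (v (x + c) - v x)^2
      = (∫ x, v (x + c) * v (x + c)) - 2 * (∫ x, v x * v (x + c)) + ∫ x, v x * v x := by
    have e : (fun x : Euc => (v (x + c) - v x)^2)
        = fun x => (v (x + c) * v (x + c) - 2 * (v x * v (x + c))) + v x * v x := by
      funext x; ring
    rw [e, integral_add I41 I2, integral_sub I4 (I1.const_mul 2), integral_const_mul]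
  rw [L, R, key1, key2]; ring

theorem EG.adv {v b : Euc → ℝ} (hv : MemLp v 2 vol) (hb : AEStronglyMeasurable b vol)
    {Cb : ℝ} (hCb : ∀ x, |b x| ≤ Cb) (c : Euc) {h : ℝ} (hh : 0 < h)
    (hD : MemLp (fun x => (b (x + c) - b x) / h) ⊤ vol) :
    ∫ x, b x * (v x * ((v (x + c) - v (x - c)) / (2 * h)))
      ≤ ((eLpNorm (fun x => (b (x + c) - b x) / h) ⊤ vol).toReal / 2)
        * ((eLpNorm v 2 vol).toReal)^2 := by
  set g : Euc → ℝ := fun x => (b (x + c) - b x) / h with hg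
  set B : ℝ := (eLpNorm g ⊤ vol).toReal with hB
  have hB0 : 0 ≤ B := ENNReal.toReal_nonneg
  have hvp := EG.shiftMem hv c
  have hvm := EG.memSub hv c
  have hbp : AEStronglyMeasurable (fun x => b (x + c)) vol :=
    hb.comp_measurePreserving (measurePreserving_add_right volume c)
  have hCb' : ∃ C, ∀ x, ‖b x‖ ≤ C := ⟨Cb, fun x => by simpa [Real.norm_eq_abs] using hCb x⟩
  have hCbp : ∃ C, ∀ x, ‖b (x + c)‖ ≤ C :=
    ⟨Cb, fun x => by simpa [Real.norm_eq_abs] using hCb (x + c)⟩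
  have P : Integrable (fun x => v x * v (x + c)) vol := EG.mulInt hv hvp
  have J1 : Integrable (fun x => b x * (v x * v (x + c))) vol := P.bdd_mul hb (Filter.Eventually.of_forall hCb'.choose_spec)
  have J3 : Integrable (fun x => b x * (v x * v (x - c))) vol :=
    (EG.mulInt hv hvm).bdd_mul hb (Filter.Eventually.of_forall hCb'.choose_spec)
  have J2 : Integrable (fun x => b (x + c) * (v x * v (x + c))) vol := P.bdd_mul hbp (Filter.Eventually.of_forall hCbp.choose_spec)
  have step1 : ∫ x, b x * (v x * v (x - c)) = ∫ x, b (x + c) * (v x * v (x + c)) := by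
    have := EG.shiftInt (fun x => b x * (v x * v (x - c))) c
    simp only [add_sub_cancel_right] at this
    rw [← this]; congr 1; funext x; ring
  have Jg : Integrable (fun x => g x * (v x * v (x + c))) vol := by
    refine P.bdd_mul (c := 2 * Cb / h) hD.aestronglyMeasurable (Filter.Eventually.of_forall fun x => ?_)
    rw [hg]
    simp only [Real.norm_eq_abs, abs_div, abs_of_pos hh]
    apply div_le_div_of_nonneg_right ?_ hh.le |>.trans_eq rfl
    calc |b (x + c) - b x| ≤ |b (x + c)| + |b x| := abs_sub _ _
      _ ≤ Cb + Cb := add_le_add (hCb _) (hCb _)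
      _ = 2 * Cb := by ring
  have main : ∫ x, b x * (v x * ((v (x + c) - v (x - c)) / (2 * h)))
      = -(1/2) * ∫ x, g x * (v x * v (x + c)) := by
    have e1 : ∫ x, b x * (v x * ((v (x + c) - v (x - c)) / (2 * h)))
        = (1/(2*h)) * ((∫ x, b x * (v x * v (x + c))) - ∫ x, b x * (v x * v (x - c))) := by
      rw [← integral_sub J1 J3, ← integral_const_mul]
      congr 1; funext x; field_simp
    have e2 : (∫ x, b x * (v x * v (x + c))) - ∫ x, b (x + c) * (v x * v (x + c))
        = ∫ x, (b x - b (x + c)) * (v x * v (x + c)) := by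
      rw [← integral_sub J1 J2]; congr 1; funext x; ring
    have e3 : (fun x : Euc => (b x - b (x + c)) * (v x * v (x + c)))
        = fun x => (-h) * (g x * (v x * v (x + c))) := by
      funext x; rw [hg]; field_simp; ring
    rw [e1, step1, e2, e3, integral_const_mul]
    field_simp
  rw [main]
  have habs : |∫ x, g x * (v x * v (x + c))| ≤ B * ((eLpNorm v 2 vol).toReal)^2 := by
    calc |∫ x, g x * (v x * v (x + c))| ≤ ∫ x, |g x * (v x * v (x + c))| := by
          have := norm_integral_le_integral_norm (μ := vol) (fun x => g x * (v x * v (x + c)))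
          simpa only [Real.norm_eq_abs] using this
      _ ≤ ∫ x, B * |v x * v (x + c)| := by
          refine integral_mono_ae Jg.abs (P.abs.const_mul B) ?_
          filter_upwards [EG.aeBound hD] with x hx
          rw [abs_mul]
          exact mul_le_mul_of_nonneg_right hx (abs_nonneg _)
      _ = B * ∫ x, |v x * v (x + c)| := integral_const_mul _ _
      _ ≤ B * ((eLpNorm v 2 vol).toReal * (eLpNorm (fun x => v (x + c)) 2 vol).toReal) := by
          exact mul_le_mul_of_nonneg_left (EG.CSabs hv hvp) hB0
      _ = B * ((eLpNorm v 2 vol).toReal)^2 := by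
          rw [EG.shiftNorm v c hv.aestronglyMeasurable]; ring
  calc -(1/2) * ∫ x, g x * (v x * v (x + c)) ≤ (1/2) * |∫ x, g x * (v x * v (x + c))| := by
        rw [neg_mul]
        have := neg_abs_le (∫ x, g x * (v x * v (x + c)))
        nlinarith [abs_nonneg (∫ x, g x * (v x * v (x + c)))]
    _ ≤ (1/2) * (B * ((eLpNorm v 2 vol).toReal)^2) := by linarith [habs]
    _ = (B / 2) * ((eLpNorm v 2 vol).toReal)^2 := by ring


theorem EG.memDplus {v : Euc → ℝ} (hv : MemLp v 2 vol) (h : ℝ) (i : Fin d) :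
    MemLp (Dplus h i v) 2 vol := by
  have e : Dplus h i v
      = fun x => (1/h) * (v (x + h • EuclideanSpace.single i 1) - v x) := by
    funext x; simp [Dplus]; ring
  rw [e]
  exact ((EG.shiftMem hv _).sub hv).const_mul _

theorem EG.memDzero {v : Euc → ℝ} (hv : MemLp v 2 vol) (h : ℝ) (i : Fin d) :
    MemLp (Dzero h i v) 2 vol := by
  have e : Dzero h i v
      = fun x => (1/(2*h)) * (v (x + h • EuclideanSpace.single i 1)
          - v (x - h • EuclideanSpace.single i 1)) := by
    funext x; simp [Dzero]; ring
  rw [e]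
  exact ((EG.shiftMem hv _).sub (EG.memSub hv _)).const_mul _

theorem EG.memLap {v : Euc → ℝ} (hv : MemLp v 2 vol) (h : ℝ) :
    MemLp (discLap h v) 2 vol := by
  have : ∀ i : Fin d, MemLp (fun x : Euc =>
      (1/h^2) * (v (x + h • EuclideanSpace.single i 1) - 2 * v x
        + v (x - h • EuclideanSpace.single i 1))) 2 vol := by
    intro i
    exact (((EG.shiftMem hv _).sub (hv.const_mul 2)).add (EG.memSub hv _)).const_mul _
  have hs := memLp_finset_sum Finset.univ (fun i _ => this i)
  have e : discLap h v = fun x => ∑ i : Fin d,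
      (1/h^2) * (v (x + h • EuclideanSpace.single i 1) - 2 * v x
        + v (x - h • EuclideanSpace.single i 1)) := by
    funext x; simp [discLap]; congr 1; funext i; ring
  rw [e]; exact hs


set_option maxHeartbeats 1000000 in
theorem EG.innerBound {h ν M_D : ℝ} (hh : 0 < h) (hν : 0 < ν) (hMD : 0 ≤ M_D)
    {v F : Euc → ℝ} {b : Euc → Fin d → ℝ}
    (hv : MemLp v 2 vol)
    (hbm : ∀ i, AEStronglyMeasurable (fun x => b x i) vol)
    (hbb : ∃ Ca : ℝ, ∀ x i, |b x i| ≤ Ca)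
    (hDb : ∀ i, MemLp (Dplus h i (fun x => b x i)) ⊤ vol)
    (hDbsum : ∑ i : Fin d, (eLpNorm (Dplus h i (fun x => b x i)) ⊤ vol).toReal ≤ M_D)
    (hF : MemLp F 2 vol) :
    ∫ x, v x * ((∑ i : Fin d, b x i * Dzero h i v x) + ν * discLap h v x + F x)
      ≤ (M_D/2 + 1/2) * ((eLpNorm v 2 vol).toReal)^2
        + (1/2) * ((eLpNorm F 2 vol).toReal)^2
        - ν * ∑ i : Fin d, ((eLpNorm (Dplus h i v) 2 vol).toReal)^2 := by
  obtain ⟨Ca, hCa⟩ := hbb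
  set N : ℝ := (eLpNorm v 2 vol).toReal with hN
  have hN0 : 0 ≤ N := ENNReal.toReal_nonneg
  -- integrability of the three parts
  have hIA : ∀ i : Fin d, Integrable (fun x => v x * (b x i * Dzero h i v x)) vol := by
    intro i
    have : Integrable (fun x => b x i * (v x * Dzero h i v x)) vol :=
      (EG.mulInt hv (EG.memDzero hv h i)).bdd_mul (hbm i)
        (Filter.Eventually.of_forall fun x => by simpa [Real.norm_eq_abs] using hCa x i)
    refine this.congr ?_
    filter_upwards with x; ring
  have hA : Integrable (fun x => v x * (∑ i : Fin d, b x i * Dzero h i v x)) vol := by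
    have := integrable_finset_sum (μ := vol) Finset.univ (fun i _ => hIA i)
    refine this.congr ?_
    filter_upwards with x
    rw [Finset.mul_sum]
  have hL : Integrable (fun x => v x * (ν * discLap h v x)) vol := by
    have := EG.mulInt hv ((EG.memLap hv h).const_mul ν)
    refine this.congr ?_
    filter_upwards with x; ring
  have hFi : Integrable (fun x => v x * F x) vol := EG.mulInt hv hF
  -- split the integral
  have split : ∫ x, v x * ((∑ i : Fin d, b x i * Dzero h i v x) + ν * discLap h v x + F x)
      = (∫ x, v x * (∑ i : Fin d, b x i * Dzero h i v x))
        + (∫ x, v x * (ν * discLap h v x)) + ∫ x, v x * F x := by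
    have e : (fun x => v x * ((∑ i : Fin d, b x i * Dzero h i v x) + ν * discLap h v x + F x))
        = fun x => (v x * (∑ i : Fin d, b x i * Dzero h i v x)
            + v x * (ν * discLap h v x)) + v x * F x := by
      funext x; ring
    have hAL : Integrable (fun x => v x * (∑ i : Fin d, b x i * Dzero h i v x)
        + v x * (ν * discLap h v x)) vol := hA.add hL
    rw [e, integral_add hAL hFi, integral_add hA hL]
  -- advection estimate
  have advEst : (∫ x, v x * (∑ i : Fin d, b x i * Dzero h i v x)) ≤ (M_D/2) * N^2 := by
    have e : ∫ x, v x * (∑ i : Fin d, b x i * Dzero h i v x)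
        = ∑ i : Fin d, ∫ x, v x * (b x i * Dzero h i v x) := by
      rw [← integral_finset_sum Finset.univ (fun i _ => hIA i)]
      congr 1; funext x; rw [Finset.mul_sum]
    rw [e]
    have each : ∀ i : Fin d, (∫ x, v x * (b x i * Dzero h i v x))
        ≤ ((eLpNorm (Dplus h i (fun x => b x i)) ⊤ vol).toReal / 2) * N^2 := by
      intro i
      have hadv := EG.adv hv (hbm i) (fun x => hCa x i)
        (h • EuclideanSpace.single i 1) hh (hDb i)
      have e2 : ∫ x, v x * (b x i * Dzero h i v x)
          = ∫ x, b x i * (v x * ((v (x + h • EuclideanSpace.single i 1)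
              - v (x - h • EuclideanSpace.single i 1)) / (2 * h))) := by
        congr 1; funext x; simp only [Dzero]; ring
      rw [e2, hN]
      exact hadv
    calc ∑ i : Fin d, ∫ x, v x * (b x i * Dzero h i v x)
        ≤ ∑ i : Fin d, ((eLpNorm (Dplus h i (fun x => b x i)) ⊤ vol).toReal / 2) * N^2 :=
          Finset.sum_le_sum fun i _ => each i
      _ = ((∑ i : Fin d, (eLpNorm (Dplus h i (fun x => b x i)) ⊤ vol).toReal) / 2) * N^2 := by
          rw [← Finset.sum_mul, ← Finset.sum_div]
      _ ≤ (M_D/2) * N^2 := by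
          have := sq_nonneg N
          gcongr
  -- Laplacian identity
  have lapEst : (∫ x, v x * (ν * discLap h v x))
      = - ν * ∑ i : Fin d, ((eLpNorm (Dplus h i v) 2 vol).toReal)^2 := by
    have hIi : ∀ i : Fin d, Integrable (fun x => v x *
        ((v (x + h • EuclideanSpace.single i 1) - 2 * v x
          + v (x - h • EuclideanSpace.single i 1)) / h ^ 2)) vol := by
      intro i
      have : Integrable (fun x => (1/h^2) * (v x *
          (v (x + h • EuclideanSpace.single i 1) - 2 * v x
            + v (x - h • EuclideanSpace.single i 1)))) vol :=
        (EG.mulInt hv (((EG.shiftMem hv _).sub (hv.const_mul 2)).add (EG.memSub hv _))).const_mul _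
      refine this.congr ?_
      filter_upwards with x; ring
    have e : ∫ x, v x * (ν * discLap h v x)
        = ν * ∑ i : Fin d, ∫ x, v x *
            ((v (x + h • EuclideanSpace.single i 1) - 2 * v x
              + v (x - h • EuclideanSpace.single i 1)) / h ^ 2) := by
      rw [← integral_finset_sum Finset.univ (fun i _ => hIi i), ← integral_const_mul]
      congr 1; funext x
      simp only [discLap, Finset.mul_sum]
      exact Finset.sum_congr rfl fun i _ => by ring
    rw [e]
    have each : ∀ i : Fin d, ∫ x, v x *
        ((v (x + h • EuclideanSpace.single i 1) - 2 * v x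
          + v (x - h • EuclideanSpace.single i 1)) / h ^ 2)
        = - ((eLpNorm (Dplus h i v) 2 vol).toReal)^2 := by
      intro i
      set c : Euc := h • EuclideanSpace.single i 1 with hc
      have hid := EG.lapId hv c
      have e1 : ∫ x, v x * ((v (x + c) - 2 * v x + v (x - c)) / h ^ 2)
          = (1/h^2) * ∫ x, v x * (v (x + c) - 2 * v x + v (x - c)) := by
        rw [← integral_const_mul]; congr 1; funext x; ring
      have e2 : ∫ x, (Dplus h i v x) * (Dplus h i v x)
          = (1/h^2) * ∫ x, (v (x + c) - v x)^2 := by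
        rw [← integral_const_mul]; congr 1; funext x
        simp only [Dplus, ← hc]; field_simp
      have e3 := EG.intSelf (EG.memDplus hv h i)
      calc ∫ x, v x * ((v (x + c) - 2 * v x + v (x - c)) / h ^ 2)
          = (1/h^2) * ∫ x, v x * (v (x + c) - 2 * v x + v (x - c)) := e1
        _ = - ((1/h^2) * ∫ x, (v (x + c) - v x)^2) := by rw [hid]; ring
        _ = - ∫ x, (Dplus h i v x) * (Dplus h i v x) := by rw [e2]
        _ = - ((eLpNorm (Dplus h i v) 2 vol).toReal)^2 := by rw [e3]
    rw [Finset.sum_congr rfl (fun i _ => each i), Finset.sum_neg_distrib]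
    ring
  -- force estimate
  have FEst : (∫ x, v x * F x) ≤ (1/2) * N^2 + (1/2) * ((eLpNorm F 2 vol).toReal)^2 := by
    have := EG.CS hv hF
    nlinarith [ENNReal.toReal_nonneg (a := eLpNorm F 2 vol), hN0,
      sq_nonneg (N - (eLpNorm F 2 vol).toReal)]
  rw [split, lapEst]
  have := sq_nonneg N
  nlinarith [advEst, FEst]

end EGAux

/-- Grönwall energy estimate for the `L²`-valued evolution
`∂_τ z = a·∇₀ʰ z + ν Δ_h z + F`:
there is a constant `C = C(T, M_D)` with
`sup_{0≤s≤T} ‖z(s)‖² + 2ν ∫₀ᵀ ‖∇₊ʰ z‖² ≤ C (‖z(0)‖² + ∫₀ᵀ ‖F‖²)`. -/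
theorem gronwall_energy_estimate (T M_D : ℝ) (hT : 0 < T) (hMD : 0 ≤ M_D) :
    ∃ C : ℝ, ∀ (d : ℕ), 1 ≤ d → ∀ (h ν : ℝ), 0 < h → 0 < ν →
    ∀ (z F : ℝ → EuclideanSpace ℝ (Fin d) → ℝ)
      (a : ℝ → EuclideanSpace ℝ (Fin d) → Fin d → ℝ),
    -- z(τ) ∈ L² on [0,T]
    (∀ τ ∈ Set.Icc (0 : ℝ) T,
      MemLp (z τ) 2 (volume : Measure (EuclideanSpace ℝ (Fin d)))) →
    -- F measurable with square-integrable L² norms in time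
    (∀ τ ∈ Set.Ioo (0 : ℝ) T,
      AEStronglyMeasurable (F τ) (volume : Measure (EuclideanSpace ℝ (Fin d)))) →
    IntegrableOn
      (fun τ => ((eLpNorm (F τ) 2
        (volume : Measure (EuclideanSpace ℝ (Fin d)))).toReal) ^ 2)
      (Set.Ioc (0 : ℝ) T) →
    -- a measurable with a(τ,·) bounded
    (∀ i : Fin d, Measurable (fun p : ℝ × EuclideanSpace ℝ (Fin d) => a p.1 p.2 i)) →
    (∀ τ ∈ Set.Ioo (0 : ℝ) T, ∃ Ca : ℝ, ∀ x i, |a τ x i| ≤ Ca) →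
    -- divergence bound Σᵢ ‖D_i^{+,h} aᵢ(τ,·)‖_{L^∞} ≤ M_D
    (∀ τ ∈ Set.Ioo (0 : ℝ) T,
      (∀ i : Fin d, MemLp (Dplus h i (fun x => a τ x i)) ∞
          (volume : Measure (EuclideanSpace ℝ (Fin d)))) ∧
      ∑ i : Fin d, (eLpNorm (Dplus h i (fun x => a τ x i)) ∞
          (volume : Measure (EuclideanSpace ℝ (Fin d)))).toReal ≤ M_D) →
    -- z, as a map [0,T] → L², is continuous and differentiable on (0,T),
    -- with ∂_τ z(τ) = a(τ,·)·∇₀ʰ z(τ) + ν Δ_h z(τ) + F(τ) in L²(ℝ^d)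
    ∀ zL : ℝ → Lp ℝ 2 (volume : Measure (EuclideanSpace ℝ (Fin d))),
    (∀ τ ∈ Set.Icc (0 : ℝ) T, (zL τ : EuclideanSpace ℝ (Fin d) → ℝ) =ᵐ[volume] z τ) →
    ContinuousOn zL (Set.Icc (0 : ℝ) T) →
    (∀ τ ∈ Set.Ioo (0 : ℝ) T,
      ∃ w : Lp ℝ 2 (volume : Measure (EuclideanSpace ℝ (Fin d))),
        HasDerivAt zL w τ ∧
        (w : EuclideanSpace ℝ (Fin d) → ℝ) =ᵐ[volume]
          fun x => (∑ i : Fin d, a τ x i * Dzero h i (z τ) x)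
            + ν * discLap h (z τ) x + F τ x) →
    -- conclusion
    ∀ s ∈ Set.Icc (0 : ℝ) T,
      ((eLpNorm (z s) 2 (volume : Measure (EuclideanSpace ℝ (Fin d)))).toReal) ^ 2
        + 2 * ν * ∫ τ in Set.Ioc (0 : ℝ) T, ∑ i : Fin d,
            ((eLpNorm (Dplus h i (z τ)) 2
              (volume : Measure (EuclideanSpace ℝ (Fin d)))).toReal) ^ 2
      ≤ C * (((eLpNorm (z 0) 2
              (volume : Measure (EuclideanSpace ℝ (Fin d)))).toReal) ^ 2
          + ∫ τ in Set.Ioc (0 : ℝ) T,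
              ((eLpNorm (F τ) 2
                (volume : Measure (EuclideanSpace ℝ (Fin d)))).toReal) ^ 2) := by
  classical
  set K : ℝ := M_D + 1 with hK
  have hK0 : 0 < K := by positivity
  refine ⟨(1 + K * T) * Real.exp (K * T) + 1, ?_⟩
  intro d hd h ν hh hν z F a hz hFmeas hFint hameas habdd hdiv zL hzLeq hzLcont hderiv s hs
  set E : ℝ → ℝ := fun t => ‖zL t‖^2 with hEdef
  set φ : ℝ → ℝ := fun τ => ((eLpNorm (F τ) 2 volume).toReal)^2 with hφdef
  set G : ℝ → ℝ := fun τ => ∑ i : Fin d, ((eLpNorm (Dplus h i (z τ)) 2 volume).toReal)^2 with hGdef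
  have hE0 : ∀ t, 0 ≤ E t := fun t => sq_nonneg _
  have hG0 : ∀ τ, 0 ≤ G τ := fun τ => Finset.sum_nonneg fun i _ => sq_nonneg _
  have hφ0 : ∀ τ, 0 ≤ φ τ := fun τ => sq_nonneg _
  have hEcont : ContinuousOn E (Set.Icc 0 T) := (hzLcont.norm.pow 2)
  have hEz : ∀ τ ∈ Set.Icc (0:ℝ) T, E τ = ((eLpNorm (z τ) 2 volume).toReal)^2 := by
    intro τ hτ
    rw [hEdef]
    simp only
    rw [Lp.norm_def, eLpNorm_congr_ae (hzLeq τ hτ)]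
  -- the differential inequality
  have hder : ∀ τ ∈ Set.Ioo (0:ℝ) T, HasDerivAt E (deriv E τ) τ ∧
      deriv E τ ≤ K * E τ + φ τ - 2*ν*G τ := by
    intro τ hτ
    obtain ⟨w, hw, hweq⟩ := hderiv τ hτ
    have hτIcc : τ ∈ Set.Icc (0:ℝ) T := Set.Ioo_subset_Icc_self hτ
    have hED : HasDerivAt E (2 * (inner ℝ (zL τ) w : ℝ)) τ := by
      have h1 := HasDerivAt.inner (𝕜 := ℝ) hw hw
      have e : E = fun t => (inner ℝ (zL t) (zL t) : ℝ) := by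
        funext t; rw [hEdef]; simp only; rw [real_inner_self_eq_norm_sq]
      rw [e]
      refine h1.congr_deriv ?_
      rw [real_inner_comm w (zL τ)]; ring
    have hvτ : MemLp (z τ) 2 volume := hz τ hτIcc
    -- measurability of the coefficients
    have hbm : ∀ i : Fin d, AEStronglyMeasurable (fun x => a τ x i) volume := fun i =>
      ((hameas i).comp (measurable_prodMk_left)).aestronglyMeasurable
    obtain ⟨Ca, hCa⟩ := habdd τ hτ
    -- MemLp of F τ
    have hALmem : MemLp (fun x => (∑ i : Fin d, a τ x i * Dzero h i (z τ) x)
        + ν * discLap h (z τ) x) 2 volume := by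
      have hsum : MemLp (fun x => ∑ i : Fin d, a τ x i * Dzero h i (z τ) x) 2
          (volume : Measure (EuclideanSpace ℝ (Fin d))) := by
        refine memLp_finset_sum Finset.univ fun i _ => ?_
        have hDz := EG.memDzero hvτ h i
        refine MemLp.of_le (hDz.const_mul |Ca|)
          ((hbm i).mul hDz.aestronglyMeasurable) ?_
        filter_upwards with x
        simp only [Real.norm_eq_abs, abs_mul]
        apply mul_le_mul_of_nonneg_right ((hCa x i).trans (le_abs_self Ca)) (abs_nonneg _)
          |>.trans
        rw [abs_abs]
      exact hsum.add ((EG.memLap hvτ h).const_mul ν)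
    have hFτ : MemLp (F τ) 2 volume := by
      have : (fun x => (w : EuclideanSpace ℝ (Fin d) → ℝ) x
          - ((∑ i : Fin d, a τ x i * Dzero h i (z τ) x) + ν * discLap h (z τ) x))
          =ᵐ[(volume : Measure (EuclideanSpace ℝ (Fin d)))] F τ := by
        filter_upwards [hweq] with x hx
        rw [hx]; ring
      exact MemLp.ae_eq this ((Lp.memLp w).sub hALmem)
    -- the inner product equals the energy integral
    have hinner : (inner ℝ (zL τ) w : ℝ)
        = ∫ x, z τ x * ((∑ i : Fin d, a τ x i * Dzero h i (z τ) x)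
            + ν * discLap h (z τ) x + F τ x) ∂volume := by
      rw [L2.inner_def]
      refine integral_congr_ae ?_
      filter_upwards [hzLeq τ hτIcc, hweq] with x h1 h2
      rw [RCLike.inner_apply, h1, h2]
      simp [mul_comm]
    have hbound := EG.innerBound (M_D := M_D) hh hν hMD hvτ hbm ⟨Ca, hCa⟩
      (fun i => (hdiv τ hτ).1 i) (hdiv τ hτ).2 hFτ
    refine ⟨by rw [hED.deriv]; exact hED, ?_⟩
    rw [hED.deriv]
    rw [hinner]
    have hEτ := hEz τ hτIcc
    rw [hK]
    calc 2 * ∫ x, z τ x * ((∑ i : Fin d, a τ x i * Dzero h i (z τ) x)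
            + ν * discLap h (z τ) x + F τ x) ∂volume
        ≤ 2 * ((M_D/2 + 1/2) * ((eLpNorm (z τ) 2 volume).toReal)^2
            + (1/2) * ((eLpNorm (F τ) 2 volume).toReal)^2
            - ν * ∑ i : Fin d, ((eLpNorm (Dplus h i (z τ)) 2 volume).toReal)^2) := by
          linarith [hbound]
      _ = (M_D + 1) * E τ + φ τ - 2*ν*G τ := by
          rw [hEτ, hφdef, hGdef]; ring
  -- integrability of φ
  have hφIoc : IntegrableOn φ (Set.Ioc (0:ℝ) T) := hFint
  have hφIcc : IntegrableOn φ (Set.Icc (0:ℝ) T) := by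
    rwa [integrableOn_Icc_iff_integrableOn_Ioc]
  set Iφ : ℝ := ∫ τ in Set.Ioc (0:ℝ) T, φ τ with hIφ
  have hIφ0 : 0 ≤ Iφ := setIntegral_nonneg measurableSet_Ioc fun τ _ => hφ0 τ
  set X : ℝ := E 0 + Iφ with hX
  have hX0 : 0 ≤ X := add_nonneg (hE0 0) hIφ0
  have hexp1 : (1:ℝ) ≤ Real.exp (K * T) := by
    rw [Real.one_le_exp_iff]; positivity
  -- the sup estimate
  have supEst : ∀ s' ∈ Set.Icc (0:ℝ) T, E s' ≤ Real.exp (K * T) * X := by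
    intro s' hs'
    rcases eq_or_lt_of_le hs'.1 with hseq | hs0
    · rw [← hseq]
      nlinarith [hE0 0, hIφ0]
    · -- apply FTC-Grönwall on [0, s']
      have hg' : ∀ x ∈ Set.Ioo (0:ℝ) s', HasDerivWithinAt
          (fun t => E t * Real.exp (-K * t))
          ((deriv E x - K * E x) * Real.exp (-K * x)) (Set.Ioi x) x := by
        intro x hx
        have hxT : x ∈ Set.Ioo (0:ℝ) T := ⟨hx.1, lt_of_lt_of_le hx.2 hs'.2⟩
        have hEx := (hder x hxT).1
        have hexpD : HasDerivAt (fun t => Real.exp (-K * t)) (Real.exp (-K * x) * (-K)) x := by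
          have h2 : HasDerivAt (fun t : ℝ => -K * t) (-K) x := by
            simpa using (hasDerivAt_id x).const_mul (-K)
          exact h2.exp
        have := hEx.mul hexpD
        refine (HasDerivAt.hasDerivWithinAt ?_)
        refine this.congr_deriv ?_
        ring
      have hbnd : ∀ x ∈ Set.Ioo (0:ℝ) s',
          (deriv E x - K * E x) * Real.exp (-K * x) ≤ φ x := by
        intro x hx
        have hxT : x ∈ Set.Ioo (0:ℝ) T := ⟨hx.1, lt_of_lt_of_le hx.2 hs'.2⟩
        have h2 := (hder x hxT).2
        have hA : deriv E x - K * E x ≤ φ x := by nlinarith [hG0 x]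
        have he1 : Real.exp (-K * x) ≤ 1 := by
          rw [Real.exp_le_one_iff]
          nlinarith [hx.1]
        have he0 : 0 < Real.exp (-K * x) := Real.exp_pos _
        rcases le_or_gt (deriv E x - K * E x) 0 with hc | hc
        · nlinarith [hφ0 x]
        · nlinarith
      have hgc : ContinuousOn (fun t => E t * Real.exp (-K * t)) (Set.Icc 0 s') :=
        (hEcont.mono (Set.Icc_subset_Icc le_rfl hs'.2)).mul
          ((Real.continuous_exp.comp (continuous_const.mul continuous_id)).continuousOn)
      have hφint : IntegrableOn φ (Set.Icc (0:ℝ) s') :=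
        hφIcc.mono_set (Set.Icc_subset_Icc le_rfl hs'.2)
      have key := intervalIntegral.sub_le_integral_of_hasDeriv_right_of_le hs0.le hgc hg' hφint hbnd
      have hsint : (∫ y in (0:ℝ)..s', φ y) ≤ Iφ := by
        rw [intervalIntegral.integral_of_le hs0.le, hIφ]
        refine setIntegral_mono_set hφIoc ?_ ?_
        · filter_upwards with x using hφ0 x
        · exact HasSubset.Subset.eventuallyLE (Set.Ioc_subset_Ioc le_rfl hs'.2)
      have hg0 : E 0 * Real.exp (-K * 0) = E 0 := by simp
      have hEs' : E s' * Real.exp (-K * s') ≤ X := by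
        rw [hX]
        have := key.trans hsint
        rw [hg0] at this
        linarith
      have hepos : 0 < Real.exp (-K * s') := Real.exp_pos _
      have : E s' ≤ X * Real.exp (K * s') := by
        rw [← mul_le_mul_iff_of_pos_right hepos, mul_assoc, ← Real.exp_add]
        simpa using hEs'
      refine this.trans ?_
      rw [mul_comm (Real.exp (K * T)) X]
      have : Real.exp (K * s') ≤ Real.exp (K * T) := by
        apply Real.exp_le_exp.2
        nlinarith [hs'.2, hs'.1]
      nlinarith
  -- finish
  have hgoalE : ((eLpNorm (z s) 2 volume).toReal)^2 = E s := (hEz s hs).symm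
  have hgoal0 : ((eLpNorm (z 0) 2 volume).toReal)^2 = E 0 :=
    (hEz 0 (Set.left_mem_Icc.2 hT.le)).symm
  have hCpos : Real.exp (K * T) ≤ (1 + K * T) * Real.exp (K * T) + 1 := by
    nlinarith [Real.exp_pos (K * T), hK0.le, hT.le, mul_nonneg hK0.le hT.le]
  by_cases hGint : IntegrableOn G (Set.Ioc (0:ℝ) T)
  · -- gradient term estimate
    have hGIcc : IntegrableOn G (Set.Icc (0:ℝ) T) := by
      rwa [integrableOn_Icc_iff_integrableOn_Ioc]
    have hEIcc : IntegrableOn E (Set.Icc (0:ℝ) T) := hEcont.integrableOn_Icc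
    have hEIoc : IntegrableOn E (Set.Ioc (0:ℝ) T) := hEIcc.mono_set Set.Ioc_subset_Icc_self
    have hψint : IntegrableOn (fun τ => 2*ν*G τ - K*E τ - φ τ) (Set.Icc (0:ℝ) T) :=
      ((hGIcc.const_mul (2*ν)).sub (hEIcc.const_mul K)).sub hφIcc
    have hnegDeriv : ∀ x ∈ Set.Ioo (0:ℝ) T, HasDerivWithinAt (fun t => -E t)
        (-deriv E x) (Set.Ioi x) x :=
      fun x hx => ((hder x hx).1.neg).hasDerivWithinAt
    have hψle : ∀ x ∈ Set.Ioo (0:ℝ) T, 2*ν*G x - K*E x - φ x ≤ -deriv E x := by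
      intro x hx
      have := (hder x hx).2
      linarith
    have key := intervalIntegral.integral_le_sub_of_hasDeriv_right_of_le hT.le
      (hEcont.neg) hnegDeriv hψint hψle
    have keyIoc : (∫ τ in Set.Ioc (0:ℝ) T, (2*ν*G τ - K*E τ - φ τ)) ≤ E 0 := by
      rw [intervalIntegral.integral_of_le hT.le] at key
      have : -E T - -E 0 ≤ E 0 := by
        have := hE0 T
        linarith
      linarith [key.trans this]
    have hsplit : (∫ τ in Set.Ioc (0:ℝ) T, (2*ν*G τ - K*E τ - φ τ))
        = 2*ν*(∫ τ in Set.Ioc (0:ℝ) T, G τ) - K*(∫ τ in Set.Ioc (0:ℝ) T, E τ) - Iφ := by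
      have i1 : Integrable (fun τ => 2*ν*G τ) (volume.restrict (Set.Ioc (0:ℝ) T)) :=
        hGint.const_mul _
      have i2 : Integrable (fun τ => K*E τ) (volume.restrict (Set.Ioc (0:ℝ) T)) :=
        hEIoc.const_mul _
      have i12 : Integrable (fun τ => 2*ν*G τ - K*E τ)
          (volume.restrict (Set.Ioc (0:ℝ) T)) := i1.sub i2
      calc ∫ τ in Set.Ioc (0:ℝ) T, (2*ν*G τ - K*E τ - φ τ)
          = (∫ τ in Set.Ioc (0:ℝ) T, (2*ν*G τ - K*E τ)) - ∫ τ in Set.Ioc (0:ℝ) T, φ τ :=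
            integral_sub i12 hφIoc
        _ = ((∫ τ in Set.Ioc (0:ℝ) T, 2*ν*G τ) - ∫ τ in Set.Ioc (0:ℝ) T, K*E τ) - Iφ := by
            rw [integral_sub i1 i2, hIφ]
        _ = 2*ν*(∫ τ in Set.Ioc (0:ℝ) T, G τ) - K*(∫ τ in Set.Ioc (0:ℝ) T, E τ) - Iφ := by
            rw [integral_const_mul, integral_const_mul]
    have hEint_bd : (∫ τ in Set.Ioc (0:ℝ) T, E τ) ≤ T * (Real.exp (K * T) * X) := by
      have hconst : (∫ τ in Set.Ioc (0:ℝ) T, Real.exp (K * T) * X)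
          = T * (Real.exp (K * T) * X) := by
        rw [setIntegral_const]
        simp [Real.volume_Ioc, ENNReal.toReal_ofReal hT.le, hT.le]
      rw [← hconst]
      refine setIntegral_mono_on hEIoc (integrableOn_const ?_) measurableSet_Ioc ?_
      · simp [Real.volume_Ioc]
      · intro x hx
        exact supEst x (Set.Ioc_subset_Icc_self hx)
    have hIG : 2*ν*(∫ τ in Set.Ioc (0:ℝ) T, G τ)
        ≤ E 0 + K * (T * (Real.exp (K * T) * X)) + Iφ := by
      rw [hsplit] at keyIoc
      nlinarith [hEint_bd, hK0.le]
    rw [hgoalE, hgoal0]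
    have hEs := supEst s hs
    have hXX : E 0 + Iφ = X := hX.symm
    have hGeq : (∫ τ in Set.Ioc (0:ℝ) T, ∑ i : Fin d,
        ((eLpNorm (Dplus h i (z τ)) 2 volume).toReal) ^ 2) = ∫ τ in Set.Ioc (0:ℝ) T, G τ := rfl
    rw [hGeq]
    have hEX : E 0 ≤ X := by rw [hX]; linarith
    have hIφX : Iφ ≤ X := by rw [hX]; linarith [hE0 0]
    nlinarith [hEs, hIG, Real.exp_pos (K * T), mul_nonneg hK0.le hT.le,
      mul_nonneg (mul_nonneg hK0.le hT.le) (mul_pos (Real.exp_pos (K*T)) (lt_of_lt_of_le (by norm_num : (0:ℝ) < 1) hexp1)).le]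
  · -- non-integrable gradient: the integral is zero
    have hGzero : (∫ τ in Set.Ioc (0:ℝ) T, ∑ i : Fin d,
        ((eLpNorm (Dplus h i (z τ)) 2 volume).toReal) ^ 2) = 0 := by
      have : (∫ τ in Set.Ioc (0:ℝ) T, G τ) = 0 := integral_undef hGint
      exact this
    rw [hgoalE, hgoal0, hGzero]
    have hEs := supEst s hs
    have hXX : E 0 + Iφ = X := hX.symm
    nlinarith [hEs, hX0, hexp1, mul_nonneg hK0.le hT.le, Real.exp_pos (K*T)]
end
end

section
/- (Greedy policy sensitivity.) Let m, k ≥ 1, μ > 0, K_u, P_*, ε, ρ ≥ 0, and let U ⊆ ℝ^m be a convex set. Let f, f̃ : ℝ^m → ℝ^k be differentiable with ‖Df(u)‖_{op} ≤ K_u and ‖Df(u) − Df̃(u)‖_{op} ≤ ε for all u ∈ U, and let L : ℝ^m → ℝ be differentiable. For p ∈ ℝ^k with |p| ≤ P_*, assume u ↦ f(u)·p + L(u) and u ↦ f̃(u)·p + L(u) are μ-strongly convex on U for all |p| ≤ P_*, and denote by G_f(p) and G_{f̃}(p) their (unique) minimizers over U. Let p, p̃ ∈ ℝ^k with |p|,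 |p̃| ≤ P_*, let u = G_f(p), and let ũ ∈ U satisfy |ũ − G_{f̃}(p̃)| ≤ ρ. Then |ũ − u| ≤ ρ + (P_*/μ) ε + (K_u/μ) |p̃ − p|. -/
/-!
Quadratic growth of a `μ`-strongly convex function at its minimizer, applied to both objectives
and added, gives `μ |b - a|² ≤ D(b) - D(a)` for the two greedy points `a = G_f(p)`,
`b = G_f̃(p̃)`, where `D(v) = f(v)·p - f̃(v)·p̃` is the difference of the objectives (`L` cancels).
Splitting `D = f·(p - p̃) + (f - f̃)·p̃`, the mean value inequality on the convex set `U` bounds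
`D(b) - D(a)` by `(K_u |p̃ - p| + ε P_*) |b - a|`, so `|b - a| ≤ (K_u |p̃ - p| + ε P_*) / μ`;
the triangle inequality through `b` adds `ρ`.
-/

open scoped RealInnerProductSpace

open Filter Topology

section QuadraticGrowth

variable {E : Type*} [NormedAddCommGroup E] [NormedSpace ℝ E] {U : Set E} {x y : E}

/- Minimality at `x` against the point `(1 - t) • x + t • y` of the segment gives
`(1 - t) φ ‖x - y‖ ≤ g y - g x` for `t ∈ (0, 1)`; let `t → 0`. -/
lemma UniformConvexOn.add_le_of_isMinOn {φ : ℝ → ℝ} {g : E → ℝ} (hg : UniformConvexOn U φ g)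
    (hx : x ∈ U) (hy : y ∈ U) (hmin : IsMinOn g U x) :
    g x + φ ‖x - y‖ ≤ g y := by
  have hseg : ∀ t ∈ Set.Ioo (0 : ℝ) 1, (1 - t) * φ ‖x - y‖ ≤ g y - g x := by
    rintro t ⟨ht₀, ht₁⟩
    have hconv := hg.2 hx hy (sub_nonneg.2 ht₁.le) ht₀.le (sub_add_cancel 1 t)
    have hle : g x ≤ g ((1 - t) • x + t • y) :=
      hmin (hg.1 hx hy (sub_nonneg.2 ht₁.le) ht₀.le (sub_add_cancel 1 t))
    simp only [smul_eq_mul] at hconv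
    have : t * ((1 - t) * φ ‖x - y‖) ≤ t * (g y - g x) := by nlinarith
    exact le_of_mul_le_mul_left this ht₀
  have hlim : Tendsto (fun t : ℝ ↦ (1 - t) * φ ‖x - y‖) (𝓝[>] 0) (𝓝 (φ ‖x - y‖)) := by
    have : Tendsto (fun t : ℝ ↦ (1 - t) * φ ‖x - y‖) (𝓝 0) (𝓝 ((1 - 0) * φ ‖x - y‖)) :=
      (tendsto_const_nhds.sub tendsto_id).mul tendsto_const_nhds
    simpa using this.mono_left nhdsWithin_le_nhds
  have := le_of_tendsto hlim (eventually_of_mem (Ioo_mem_nhdsGT one_pos) hseg)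
  linarith

lemma StrongConvexOn.norm_sub_le_of_isMinOn {μ C : ℝ} {g h : E → ℝ} {a b : E}
    (hg : StrongConvexOn U μ g) (hh : StrongConvexOn U μ h) (hμ : 0 < μ) (hC : 0 ≤ C)
    (ha : a ∈ U) (hb : b ∈ U) (hga : IsMinOn g U a) (hhb : IsMinOn h U b)
    (hgh : (g b - h b) - (g a - h a) ≤ C * ‖b - a‖) :
    ‖b - a‖ ≤ C / μ := by
  have hgrowth_g := UniformConvexOn.add_le_of_isMinOn hg ha hb hga
  have hgrowth_h := UniformConvexOn.add_le_of_isMinOn hh hb ha hhb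
  rw [norm_sub_rev] at hgrowth_g
  have hsq : μ * ‖b - a‖ * ‖b - a‖ ≤ C * ‖b - a‖ := by nlinarith
  rcases (norm_nonneg (b - a)).eq_or_lt with hzero | hpos
  · rw [← hzero]
    positivity
  · rw [le_div_iff₀ hμ, mul_comm]
    exact le_of_mul_le_mul_right hsq hpos

end QuadraticGrowth

lemma inner_sub_inner_sub_le {E F : Type*} [NormedAddCommGroup E] [NormedAddCommGroup F]
    [InnerProductSpace ℝ F] {f ftil : E → F} {a b : E} {p q : F} {K ε : ℝ}
    (hf : ‖f b - f a‖ ≤ K * ‖b - a‖)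
    (hftil : ‖(f b - ftil b) - (f a - ftil a)‖ ≤ ε * ‖b - a‖) :
    (⟪f b, p⟫ - ⟪ftil b, q⟫) - (⟪f a, p⟫ - ⟪ftil a, q⟫)
      ≤ (K * ‖q - p‖ + ε * ‖q‖) * ‖b - a‖ := by
  have hsplit : (⟪f b, p⟫ - ⟪ftil b, q⟫) - (⟪f a, p⟫ - ⟪ftil a, q⟫)
      = ⟪f b - f a, p - q⟫ + ⟪(f b - ftil b) - (f a - ftil a), q⟫ := by
    simp only [inner_sub_left, inner_sub_right]
    ring
  have hmodel : ⟪f b - f a, p - q⟫ ≤ K * ‖b - a‖ * ‖q - p‖ := by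
    rw [norm_sub_rev q p]
    exact (real_inner_le_norm _ _).trans (mul_le_mul_of_nonneg_right hf (norm_nonneg _))
  have herror : ⟪(f b - ftil b) - (f a - ftil a), q⟫ ≤ ε * ‖b - a‖ * ‖q‖ :=
    (real_inner_le_norm _ _).trans (mul_le_mul_of_nonneg_right hftil (norm_nonneg _))
  rw [hsplit]
  linarith

theorem greedy_policy_sensitivity_general
    (m k : ℕ) (μ K_u Pstar ε ρ : ℝ)
    (hμ : 0 < μ) (hK : 0 ≤ K_u) (hP : 0 ≤ Pstar) (hε : 0 ≤ ε)
    (U : Set (EuclideanSpace ℝ (Fin m))) (hU : Convex ℝ U)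
    (f ftil : EuclideanSpace ℝ (Fin m) → EuclideanSpace ℝ (Fin k))
    (hf : Differentiable ℝ f) (hftil : Differentiable ℝ ftil)
    (hfK : ∀ u ∈ U, ‖fderiv ℝ f u‖ ≤ K_u)
    (hDf : ∀ u ∈ U, ‖fderiv ℝ f u - fderiv ℝ ftil u‖ ≤ ε)
    (L : EuclideanSpace ℝ (Fin m) → ℝ)
    (hΦ : ∀ p : EuclideanSpace ℝ (Fin k), ‖p‖ ≤ Pstar →
      StrongConvexOn U μ (fun u => ⟪f u, p⟫ + L u))
    (hΦtil : ∀ p : EuclideanSpace ℝ (Fin k), ‖p‖ ≤ Pstar →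
      StrongConvexOn U μ (fun u => ⟪ftil u, p⟫ + L u))
    -- the greedy maps: unique minimizers of the two objectives over `U`
    (Gf Gftil : EuclideanSpace ℝ (Fin k) → EuclideanSpace ℝ (Fin m))
    (hGf : ∀ p : EuclideanSpace ℝ (Fin k), ‖p‖ ≤ Pstar →
      Gf p ∈ U ∧ IsMinOn (fun v => ⟪f v, p⟫ + L v) U (Gf p))
    (hGftil : ∀ p : EuclideanSpace ℝ (Fin k), ‖p‖ ≤ Pstar →
      Gftil p ∈ U ∧ IsMinOn (fun v => ⟪ftil v, p⟫ + L v) U (Gftil p))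
    (p ptil : EuclideanSpace ℝ (Fin k)) (hp : ‖p‖ ≤ Pstar) (hptil : ‖ptil‖ ≤ Pstar)
    (u : EuclideanSpace ℝ (Fin m)) (hu : u = Gf p)
    (util : EuclideanSpace ℝ (Fin m))
    (hnear : ‖util - Gftil ptil‖ ≤ ρ) :
    ‖util - u‖ ≤ ρ + (Pstar / μ) * ε + (K_u / μ) * ‖ptil - p‖ := by
  obtain ⟨ha, hamin⟩ := hGf p hp
  obtain ⟨hb, hbmin⟩ := hGftil ptil hptil
  set a := Gf p
  set b := Gftil ptil
  have hlip : ‖f b - f a‖ ≤ K_u * ‖b - a‖ :=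
    hU.norm_image_sub_le_of_norm_fderiv_le (fun x _ ↦ hf x) hfK ha hb
  have hlip_error : ‖(f b - ftil b) - (f a - ftil a)‖ ≤ ε * ‖b - a‖ :=
    hU.norm_image_sub_le_of_norm_fderiv_le (f := fun v ↦ f v - ftil v)
      (fun x _ ↦ (hf x).sub (hftil x))
      (fun x hx ↦ fderiv_sub (hf x) (hftil x) ▸ hDf x hx) ha hb
  have hobjective := inner_sub_inner_sub_le (p := p) (q := ptil) hlip hlip_error
  have hPstar : (K_u * ‖ptil - p‖ + ε * ‖ptil‖) * ‖b - a‖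
      ≤ (K_u * ‖ptil - p‖ + ε * Pstar) * ‖b - a‖ := by gcongr
  have hba : ‖b - a‖ ≤ (K_u * ‖ptil - p‖ + ε * Pstar) / μ :=
    StrongConvexOn.norm_sub_le_of_isMinOn (hΦ p hp) (hΦtil ptil hptil) hμ (by positivity)
      ha hb hamin hbmin (by linarith)
  calc ‖util - u‖ ≤ ‖util - b‖ + ‖b - a‖ := hu ▸ norm_sub_le_norm_sub_add_norm_sub _ _ _
    _ ≤ ρ + (K_u * ‖ptil - p‖ + ε * Pstar) / μ := add_le_add hnear hba
    _ = ρ + (Pstar / μ) * ε + (K_u / μ) * ‖ptil - p‖ := by ring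

/-- Greedy policy sensitivity: combining the Lipschitz dependence on the gradient variable,
the model-error stability, and an inexact-greedy tolerance `ρ`,
`|ũ − u| ≤ ρ + (P_*/μ) ε + (K_u/μ) |p̃ − p|`. -/
theorem greedy_policy_sensitivity
    (m k : ℕ) (hm : 1 ≤ m) (hk : 1 ≤ k) (μ K_u Pstar ε ρ : ℝ)
    (hμ : 0 < μ) (hK : 0 ≤ K_u) (hP : 0 ≤ Pstar) (hε : 0 ≤ ε) (hρ : 0 ≤ ρ)
    (U : Set (EuclideanSpace ℝ (Fin m))) (hU : Convex ℝ U)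
    (f ftil : EuclideanSpace ℝ (Fin m) → EuclideanSpace ℝ (Fin k))
    (hf : Differentiable ℝ f) (hftil : Differentiable ℝ ftil)
    (hfK : ∀ u ∈ U, ‖fderiv ℝ f u‖ ≤ K_u)
    (hDf : ∀ u ∈ U, ‖fderiv ℝ f u - fderiv ℝ ftil u‖ ≤ ε)
    (L : EuclideanSpace ℝ (Fin m) → ℝ) (hL : Differentiable ℝ L)
    (hΦ : ∀ p : EuclideanSpace ℝ (Fin k), ‖p‖ ≤ Pstar →
      StrongConvexOn U μ (fun u => ⟪f u, p⟫ + L u))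
    (hΦtil : ∀ p : EuclideanSpace ℝ (Fin k), ‖p‖ ≤ Pstar →
      StrongConvexOn U μ (fun u => ⟪ftil u, p⟫ + L u))
    -- the greedy maps: unique minimizers of the two objectives over `U`
    (Gf Gftil : EuclideanSpace ℝ (Fin k) → EuclideanSpace ℝ (Fin m))
    (hGf : ∀ p : EuclideanSpace ℝ (Fin k), ‖p‖ ≤ Pstar →
      Gf p ∈ U ∧ IsMinOn (fun v => ⟪f v, p⟫ + L v) U (Gf p))
    (hGftil : ∀ p : EuclideanSpace ℝ (Fin k), ‖p‖ ≤ Pstar →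
      Gftil p ∈ U ∧ IsMinOn (fun v => ⟪ftil v, p⟫ + L v) U (Gftil p))
    (p ptil : EuclideanSpace ℝ (Fin k)) (hp : ‖p‖ ≤ Pstar) (hptil : ‖ptil‖ ≤ Pstar)
    (u : EuclideanSpace ℝ (Fin m)) (hu : u = Gf p)
    (util : EuclideanSpace ℝ (Fin m)) (hutil : util ∈ U)
    (hnear : ‖util - Gftil ptil‖ ≤ ρ) :
    ‖util - u‖ ≤ ρ + (Pstar / μ) * ε + (K_u / μ) * ‖ptil - p‖ :=
  greedy_policy_sensitivity_general m k μ K_u Pstar ε ρ hμ hK hP hε U hU f ftil hf hftil hfK hDf L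
    hΦ hΦtil Gf Gftil hGf hGftil p ptil hp hptil u hu util hnear
end
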